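/- arXiv:1309.6070 — 2 statements merged into one kernel-verified Lean document; each statement's English description precedes it below -/
import Mathlib

section
/- For every oriented word u of rank k ≥ 2 and every reduced word g of rank k, τ_u(g) = τ_{u^{-1}}(g^rev), where g^rev is the reversal of g and u^{-1} is the inverse word of u. Consequently, the positive cone satisfies P_{u^{-1}} = (P_u)^rev. -/
open FreeGroup

/-- A letter over the alphabet `{a_1,...,a_k, a_1⁻¹,...,a_k⁻¹}`:
`(i, true)` is the positive letter `a_i`, `(i, false)` is `a_i⁻¹`. -/
abbrev Letter (k : ℕ) := Fin k × Bool

/-- Formal inverse of a letter. -/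
def invL {k : ℕ} (x : Letter k) : Letter k := (x.1, !x.2)

/-- An oriented word of rank `k`: each of the `2k` letters appears exactly once. -/
def IsOriented {k : ℕ} (u : List (Letter k)) : Prop :=
  u.Nodup ∧ ∀ x : Letter k, x ∈ u

/-- `x` occurs to the left of `y` in `u`. -/
def leftOf {k : ℕ} (u : List (Letter k)) (x y : Letter k) : Prop :=
  u.idxOf x < u.idxOf y

instance {k : ℕ} (u : List (Letter k)) (x y : Letter k) : Decidable (leftOf u x y) :=
  inferInstanceAs (Decidable (_ < _))

/-- Number of occurrences of the two-letter word `xy` as a contiguous subword of `L`. -/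
def cnt {k : ℕ} (L : List (Letter k)) (x y : Letter k) : ℕ :=
  (L.zip L.tail).count (x, y)

/-- The case transition weight `α_u`, on a reduced word `L`. -/
noncomputable def alphaW {k : ℕ} (u L : List (Letter k)) : ℝ :=
  (∑ a : Fin k, ∑ b : Fin k,
      if leftOf u (a, false) (b, false) then (cnt L (a, true) (b, false) : ℝ) else 0)
  - ∑ a : Fin k, ∑ b : Fin k,
      if leftOf u (a, true) (b, true) then (cnt L (b, false) (a, true) : ℝ) else 0

/-- The letter transition weight `β_u`, on a reduced word `L`. -/
noncomputable def betaW {k : ℕ} (u L : List (Letter k)) : ℝ :=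
  (∑ a : Fin k, ∑ b : Fin k,
      if leftOf u (a, false) (b, true) then (cnt L (a, true) (b, true) : ℝ) else 0)
  - ∑ a : Fin k, ∑ b : Fin k,
      if leftOf u (a, false) (b, true) then (cnt L (b, false) (a, false) : ℝ) else 0

/-- The last letter weight `ω`, on a reduced word `L`. -/
noncomputable def omegaW {k : ℕ} (L : List (Letter k)) : ℝ :=
  match L.getLast? with
  | none => 0
  | some x => if x.2 then 1 / 2 else -(1 / 2)

/-- The weight `τ_u` induced by an oriented word `u`, evaluated on the reduced form. -/
noncomputable def tau {k : ℕ} (u : List (Letter k)) (g : FreeGroup (Fin k)) : ℝ :=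
  alphaW u g.toWord + betaW u g.toWord + omegaW g.toWord

/-- The weight contribution `wtc_u` of a reduced two-letter word `xy`. -/
noncomputable def wtc {k : ℕ} (u : List (Letter k)) (x y : Letter k) : ℝ :=
  if x.2 then (if leftOf u (x.1, false) y then 1 else 0)
  else (if leftOf u y (x.1, true) then -1 else 0)

/-- The inverse word of `u`. -/
def invWord {k : ℕ} (u : List (Letter k)) : List (Letter k) := (u.map invL).reverse

/-- A function `τ : G → ℝ` with small relative defect. -/
def SmallRelDefect {G : Type*} [Group G] (τ : G → ℝ) : Prop :=
  τ 1 = 0 ∧ ∀ g h : G, (g ≠ 1 ∨ h ≠ 1) → |τ g + τ h - τ (g * h)| < |τ g| + |τ h|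

/-!
Both sides are read off the length-two subwords of the reduced word: `α_u + β_u` is the sum of
the contributions `wtc_u x y` of its subwords `xy`. Reversal turns `xy` into `yx`, and since
`u⁻¹` lists the inverses of the letters of `u` in the opposite order,
`wtc_{u⁻¹} y x = wtc_u x y + s y - s x`, where `s` is `±1/2` according to the sign of the
letter. Summed along the word, the corrections telescope to `s (last) - s (first)`, which is
`ω g - ω g^rev`. Since the reversal of a reduced word is reduced, `g ↦ g^rev` is an involution
of `F_k`, and the statement on positive cones follows.
-/

namespace List

variable {α β : Type*} [BEq α] [LawfulBEq α]

theorem idxOf_reverse_of_nodup {l : List α} (hl : l.Nodup) {x : α} (hx : x ∈ l) :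
    l.reverse.idxOf x = l.length - 1 - l.idxOf x := by
  induction l with
  | nil => simp at hx
  | cons a t ih =>
    obtain ⟨hat, hnd⟩ := nodup_cons.1 hl
    rw [reverse_cons, idxOf_append]
    rcases mem_cons.1 hx with rfl | hxt
    · simp [hat]
    · have hax : a ≠ x := by rintro rfl; exact hat hxt
      have := idxOf_lt_length_of_mem hxt
      simp [hxt, ih hnd hxt, hax]
      omega

theorem idxOf_map_of_injective [BEq β] [LawfulBEq β] {f : α → β} (hf : Function.Injective f)
    (l : List α) (x : α) : (l.map f).idxOf (f x) = l.idxOf x := by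
  induction l with
  | nil => rfl
  | cons a t ih =>
    have : (f a == f x) = (a == x) := Bool.eq_iff_iff.2 (by simp only [beq_iff_eq, hf.eq_iff])
    rw [map_cons, idxOf_cons, idxOf_cons, ih, this]

end List

namespace Finset

variable {ι κ M : Type*} [Fintype ι] [Fintype κ] [DecidableEq ι] [DecidableEq κ]
  [AddCommMonoid M] (P : ι → κ → Prop) [∀ a b, Decidable (P a b)] (c : M)

theorem sum_sum_ite_ite_and (i : ι) (j : κ) :
    (∑ a, ∑ b, if P a b then (if i = a ∧ j = b then c else 0) else 0) =
      if P i j then c else 0 := by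
  have : ∀ a b, (if P a b then (if i = a ∧ j = b then c else 0) else 0) =
      if i = a then (if j = b then (if P a b then c else 0) else 0) else 0 := by
    intro a b; split_ifs <;> simp_all
  simp [this]

theorem sum_sum_ite_ite_and_swap (i : κ) (j : ι) :
    (∑ a, ∑ b, if P a b then (if i = b ∧ j = a then c else 0) else 0) =
      if P j i then c else 0 := by
  rw [sum_comm]
  exact sum_sum_ite_ite_and (fun b a => P a b) c i j

end Finset

namespace FreeGroup

theorem IsReduced.reverse {α : Type*} {L : List (α × Bool)} (h : IsReduced L) :
    IsReduced L.reverse :=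
  List.isChain_reverse.2 (h.imp fun _ _ hab hba => (hab hba.symm).symm)

theorem toWord_mk_reverse_toWord {α : Type*} [DecidableEq α] (g : FreeGroup α) :
    (mk g.toWord.reverse).toWord = g.toWord.reverse := by
  rw [toWord_mk, isReduced_toWord.reverse.reduce_eq]

theorem mk_reverse_toWord_mk_reverse_toWord {α : Type*} [DecidableEq α]
    (g : FreeGroup α) : mk (mk g.toWord.reverse).toWord.reverse = g := by
  rw [toWord_mk_reverse_toWord, List.reverse_reverse, mk_toWord]

end FreeGroup

theorem invL_involutive {k : ℕ} : Function.Involutive (invL (k := k)) := fun x => by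
  simp [invL]

section Orientation

variable {k : ℕ} {u : List (Letter k)}

theorem leftOf_invWord (hu : IsOriented u) (p q : Letter k) :
    leftOf (invWord u) p q ↔ leftOf u (invL q) (invL p) := by
  have hmem : ∀ z, z ∈ u.map invL := fun z => by
    rw [← invL_involutive z]; exact List.mem_map_of_mem (hu.2 _)
  have hidx : ∀ z, (invWord u).idxOf z = u.length - 1 - u.idxOf (invL z) := fun z => by
    rw [invWord, List.idxOf_reverse_of_nodup (hu.1.map invL_involutive.injective) (hmem z),
      ← List.idxOf_map_of_injective invL_involutive.injective u (invL z), invL_involutive,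
      List.length_map]
  have hp := List.idxOf_lt_length_of_mem (hu.2 (invL p))
  have hq := List.idxOf_lt_length_of_mem (hu.2 (invL q))
  unfold leftOf
  rw [hidx, hidx]
  omega

theorem leftOf_iff_not_leftOf (hu : IsOriented u) {p q : Letter k} (hpq : p ≠ q) :
    leftOf u p q ↔ ¬ leftOf u q p := by
  have : u.idxOf p ≠ u.idxOf q := fun h => hpq ((List.idxOf_inj (hu.2 p)).1 h)
  unfold leftOf
  omega

end Orientation

section WeightSum

variable {k : ℕ}

noncomputable def wtcSum (u : List (Letter k)) : List (Letter k) → ℝ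
  | x :: y :: t => wtc u x y + wtcSum u (y :: t)
  | _ => 0

theorem cnt_cons_cons (x y a b : Letter k) (t : List (Letter k)) :
    (cnt (x :: y :: t) a b : ℝ) = cnt (y :: t) a b + if x = a ∧ y = b then 1 else 0 := by
  by_cases h : x = a ∧ y = b <;> simp [cnt, h]

theorem alphaW_add_betaW (u : List (Letter k)) :
    ∀ L, alphaW u L + betaW u L = wtcSum u L
  | [] | [_] => by simp [alphaW, betaW, wtcSum, cnt]
  | x :: y :: t => by
    rw [wtcSum, ← alphaW_add_betaW u (y :: t)]
    obtain ⟨a, _ | _⟩ := x <;> obtain ⟨b, _ | _⟩ := y <;>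
      simp [alphaW, betaW, wtc, cnt_cons_cons, ite_add_zero, Finset.sum_add_distrib,
        Finset.sum_sum_ite_ite_and, Finset.sum_sum_ite_ite_and_swap] <;>
      split_ifs <;> ring

end WeightSum

section Reversal

variable {k : ℕ} {u : List (Letter k)}

noncomputable def halfSign (x : Letter k) : ℝ := if x.2 then 1 / 2 else -(1 / 2)

theorem omegaW_append_singleton (L : List (Letter k)) (x : Letter k) :
    omegaW (L ++ [x]) = halfSign x := by
  simp [omegaW, halfSign]

theorem omegaW_cons_cons (x y : Letter k) (t : List (Letter k)) :
    omegaW (x :: y :: t) = omegaW (y :: t) := by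
  simp [omegaW, List.getLast?_cons_cons]

theorem wtc_invWord (hu : IsOriented u) {x y : Letter k} (hxy : x.1 = y.1 → x.2 = y.2) :
    wtc (invWord u) y x = wtc u x y + halfSign y - halfSign x := by
  obtain ⟨a, _ | _⟩ := x <;> obtain ⟨b, _ | _⟩ := y <;>
    simp only [wtc, halfSign, leftOf_invWord hu, invL, Bool.not_false, Bool.not_true,
      Bool.false_eq_true, if_true, if_false] at hxy ⊢
  · norm_num
  · have hab : ((a : Fin k), true) ≠ (b, true) := by simpa using hxy
    simp only [leftOf_iff_not_leftOf hu hab]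
    split_ifs <;> norm_num
  · have hba : ((b : Fin k), false) ≠ (a, false) := by simpa [eq_comm] using hxy
    simp only [leftOf_iff_not_leftOf hu hba]
    split_ifs <;> norm_num
  · norm_num

theorem wtcSum_append_singleton (x z : Letter k) :
    ∀ R : List (Letter k), R.getLast? = some z → wtcSum u (R ++ [x]) = wtcSum u R + wtc u z x
  | [a], h => by simp_all [wtcSum]
  | a :: b :: s, h => by
    rw [List.getLast?_cons_cons] at h
    simp only [List.cons_append, wtcSum]
    rw [← List.cons_append, wtcSum_append_singleton x z (b :: s) h, add_assoc]

theorem wtcSum_add_omegaW_reverse (hu : IsOriented u) :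
    ∀ L : List (Letter k), IsReduced L →
      wtcSum u L + omegaW L = wtcSum (invWord u) L.reverse + omegaW L.reverse
  | [], _ | [_], _ => by simp [wtcSum]
  | x :: y :: t, hL => by
    obtain ⟨hxy, ht⟩ := isReduced_cons_cons.1 hL
    have hlast : (y :: t).reverse.getLast? = some y := by simp
    have hω : omegaW (y :: t).reverse = halfSign y := by
      rw [List.reverse_cons, omegaW_append_singleton]
    rw [List.reverse_cons, wtcSum_append_singleton x y _ hlast, omegaW_append_singleton,
      wtc_invWord hu hxy, wtcSum, omegaW_cons_cons]
    linarith [wtcSum_add_omegaW_reverse hu (y :: t) ht, hω]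

end Reversal

theorem tau_eq_tau_invWord_mk_reverse {k : ℕ} {u : List (Letter k)} (hu : IsOriented u)
    (g : FreeGroup (Fin k)) : tau u g = tau (invWord u) (mk g.toWord.reverse) := by
  rw [tau, tau, toWord_mk_reverse_toWord, alphaW_add_betaW, alphaW_add_betaW]
  exact wtcSum_add_omegaW_reverse hu g.toWord isReduced_toWord

theorem stmt13_general {k : ℕ} (u : List (Letter k)) (hu : IsOriented u) :
    (∀ g : FreeGroup (Fin k), tau u g = tau (invWord u) (FreeGroup.mk g.toWord.reverse))
    ∧ ∀ g : FreeGroup (Fin k),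
        (0 < tau (invWord u) g
          ↔ ∃ h : FreeGroup (Fin k), 0 < tau u h ∧ g = FreeGroup.mk h.toWord.reverse) := by
  refine ⟨tau_eq_tau_invWord_mk_reverse hu, fun g => ⟨fun hg => ?_, ?_⟩⟩
  · refine ⟨mk g.toWord.reverse, ?_, (mk_reverse_toWord_mk_reverse_toWord g).symm⟩
    rwa [tau_eq_tau_invWord_mk_reverse hu, mk_reverse_toWord_mk_reverse_toWord]
  · rintro ⟨h, hh, rfl⟩
    rwa [← tau_eq_tau_invWord_mk_reverse hu]

theorem stmt13 {k : ℕ} (hk : 2 ≤ k) (u : List (Letter k)) (hu : IsOriented u) :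
    (∀ g : FreeGroup (Fin k), tau u g = tau (invWord u) (FreeGroup.mk g.toWord.reverse))
    ∧ ∀ g : FreeGroup (Fin k),
        (0 < tau (invWord u) g
          ↔ ∃ h : FreeGroup (Fin k), 0 < tau u h ∧ g = FreeGroup.mk h.toWord.reverse) :=
  stmt13_general u hu
end

section
/- For every k ≥ 2 and every pair u, u' of distinct oriented words of rank k, the positive cones P_u and P_{u'} differ; i.e., there exists g ∈ F_k with τ_u(g) > 0 and τ_{u'}(g) < 0 or vice versa. Hence the (2k)! oriented words of rank k induce (2k)! pairwise distinct left orders on F_k. -/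
open FreeGroup

/-!
On a reduced word `x₁ ⋯ xₙ`, `τ_u` is the sum of the weights `wtc_u(xᵢ xᵢ₊₁)` of its two-letter
subwords plus `±1/2` for the sign of the last letter, and each `wtc_u(xy)` only records whether one
letter precedes another in `u`. Two distinct oriented words order some pair of letters
differently. If both letters have the same sign, a word of length two separates the cones.
Otherwise, once the orders agree on all pairs of letters of equal sign, the disagreement concerns
some `x⁻¹` and `y`, and a word of length three or four, chosen according to the positions of
`y⁻¹` and `x` among the negative and positive letters of `u`, has `τ`-values `±1/2` of opposite
signs.
-/

theorem Multiset.sum_sum_ite_count {ι β : Type*} [Fintype ι] [DecidableEq β] (P : ι → ι → Prop)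
    [DecidableRel P] (e : ι → ι → β) (Z : Multiset β) :
    (∑ a, ∑ b, if P a b then (Z.count (e a b) : ℝ) else 0) =
      (Z.map fun z => ∑ a, ∑ b, if e a b = z ∧ P a b then (1 : ℝ) else 0).sum := by
  induction Z using Multiset.induction_on with
  | empty => simp
  | cons z Z ih =>
    rw [Multiset.map_cons, Multiset.sum_cons, ← ih, ← Finset.sum_add_distrib]
    refine Finset.sum_congr rfl fun a _ => ?_
    rw [← Finset.sum_add_distrib]
    refine Finset.sum_congr rfl fun b _ => ?_
    by_cases h : e a b = z
    · subst h
      by_cases hP : P a b <;> simp [hP, add_comm]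
    · simp [h]

section Weight

variable {k : ℕ}

lemma cnt_eq_count (L : List (Letter k)) (x y : Letter k) :
    cnt L x y = Multiset.count (x, y) (L.zip L.tail : Multiset (Letter k × Letter k)) := by
  rw [cnt, Multiset.coe_count]
  -- `cnt` counts with the `BEq` instance of the product, `Multiset.count` with `DecidableEq`
  congr
  apply lawful_beq_subsingleton

lemma wtc_eq_sum (u : List (Letter k)) (x y : Letter k) :
    wtc u x y =
      ((∑ a, ∑ b, if ((a, true), (b, false)) = (x, y) ∧ leftOf u (a, false) (b, false)
          then (1 : ℝ) else 0)
        - ∑ a, ∑ b, if ((b, false), (a, true)) = (x, y) ∧ leftOf u (a, true) (b, true)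
          then 1 else 0)
      + ((∑ a, ∑ b, if ((a, true), (b, true)) = (x, y) ∧ leftOf u (a, false) (b, true)
          then 1 else 0)
        - ∑ a, ∑ b, if ((b, false), (a, false)) = (x, y) ∧ leftOf u (a, false) (b, true)
          then 1 else 0) := by
  obtain ⟨x, _ | _⟩ := x <;> obtain ⟨y, _ | _⟩ := y <;>
    simp [wtc, ite_and, Prod.ext_iff] <;> split_ifs <;> norm_num

lemma alphaW_add_betaW_s16 (u L : List (Letter k)) :
    alphaW u L + betaW u L = ((L.zip L.tail).map fun z => wtc u z.1 z.2).sum := by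
  simp only [alphaW, betaW, cnt_eq_count, Multiset.sum_sum_ite_count, ← Multiset.sum_map_sub,
    ← Multiset.sum_map_add, ← wtc_eq_sum]
  simp

lemma tau_mk_of_isReduced (u : List (Letter k)) {L : List (Letter k)} (hL : IsReduced L) :
    tau u (mk L) = ((L.zip L.tail).map fun z => wtc u z.1 z.2).sum + omegaW L := by
  rw [tau, toWord_mk, hL.reduce_eq, alphaW_add_betaW_s16]

end Weight

section Orientation

variable {k : ℕ} {u u' : List (Letter k)} {p q r : Letter k}

lemma leftOf_asymm (h : leftOf u p q) : ¬ leftOf u q p := Nat.lt_asymm h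

lemma leftOf_trans (h : leftOf u p q) (h' : leftOf u q r) : leftOf u p r := Nat.lt_trans h h'

lemma ne_of_leftOf (h : leftOf u p q) : p ≠ q := by
  rintro rfl
  exact lt_irrefl _ h

lemma leftOf_total (hp : p ∈ u) (hpq : p ≠ q) : leftOf u p q ∨ leftOf u q p := by
  rcases Nat.lt_trichotomy (u.idxOf p) (u.idxOf q) with h | h | h
  · exact .inl h
  · exact absurd ((List.idxOf_inj hp).1 h) hpq
  · exact .inr h

lemma List.Nodup.pairwise_leftOf (hu : u.Nodup) : u.Pairwise (leftOf u) :=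
  List.pairwise_iff_getElem.2 fun i j hi hj hij => by
    rwa [leftOf, hu.idxOf_getElem, hu.idxOf_getElem]

lemma exists_leftOf_and_leftOf_of_ne (hu : IsOriented u) (hu' : IsOriented u') (hne : u ≠ u') :
    ∃ p q, leftOf u p q ∧ leftOf u' q p := by
  by_contra! h
  have hu'u : u'.Pairwise (leftOf u) :=
    hu'.1.pairwise_leftOf.imp_of_mem fun {p q} _ _ hpq =>
      (leftOf_total (hu.2 p) (ne_of_leftOf hpq)).resolve_right fun hqp => h q p hqp hpq
  have hperm : u.Perm u' :=
    (List.perm_ext_iff_of_nodup hu.1 hu'.1).2 fun x => iff_of_true (hu.2 x) (hu'.2 x)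
  exact hne (hperm.eq_of_pairwise (fun _ _ _ _ hab hba => absurd hba (leftOf_asymm hab))
    hu.1.pairwise_leftOf hu'u)

end Orientation

section Separation

variable {k : ℕ} {u u' : List (Letter k)} {a b x y z : Fin k}

def ConesSeparated (u u' : List (Letter k)) : Prop :=
  ∃ g : FreeGroup (Fin k), (0 < tau u g ∧ tau u' g < 0) ∨ (tau u g < 0 ∧ 0 < tau u' g)

lemma ConesSeparated.symm (h : ConesSeparated u u') : ConesSeparated u' u := by
  obtain ⟨g, hg | hg⟩ := h
  exacts [⟨g, .inr hg.symm⟩, ⟨g, .inl hg.symm⟩]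

def AgreeOnSign (u u' : List (Letter k)) (s : Bool) : Prop :=
  ∀ a b : Fin k, leftOf u (a, s) (b, s) ↔ leftOf u' (a, s) (b, s)

lemma AgreeOnSign.symm {s : Bool} (h : AgreeOnSign u u' s) : AgreeOnSign u' u s :=
  fun a b => (h a b).symm

lemma ConesSeparated.of_sameSign {s : Bool} (h : leftOf u (a, s) (b, s))
    (h' : ¬ leftOf u' (a, s) (b, s)) : ConesSeparated u u' := by
  have hab : a ≠ b := fun hab => ne_of_leftOf h (by rw [hab])
  cases s
  · refine ⟨mk [(a, true), (b, false)], .inl ⟨?_, ?_⟩⟩ <;>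
      rw [tau_mk_of_isReduced _ (by simp [FreeGroup.IsReduced, hab])] <;>
      norm_num [wtc, omegaW, h, h']
  · refine ⟨mk [(b, false), (a, true)], .inr ⟨?_, ?_⟩⟩ <;>
      rw [tau_mk_of_isReduced _ (by simp [FreeGroup.IsReduced, hab.symm])] <;>
      norm_num [wtc, omegaW, h, h']

lemma ConesSeparated.of_not_agreeOnSign {s : Bool} (h : ¬ AgreeOnSign u u' s) :
    ConesSeparated u u' := by
  obtain ⟨a, hb⟩ := not_forall.1 h
  obtain ⟨b, hab⟩ := not_forall.1 hb
  by_cases hu : leftOf u (a, s) (b, s)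
  · exact .of_sameSign hu fun hu' => hab (iff_of_true hu hu')
  · exact (ConesSeparated.of_sameSign (not_not.1 fun hu' => hab (iff_of_false hu hu')) hu).symm

lemma ConesSeparated.of_neg_pos_of_not_leftOf_neg (hzy : z ≠ y)
    (hc : leftOf u (x, false) (y, true)) (hc' : ¬ leftOf u' (x, false) (y, true))
    (hz : ¬ leftOf u (y, false) (z, false)) (hz' : ¬ leftOf u' (y, false) (z, false)) :
    ConesSeparated u u' := by
  refine ⟨mk [(x, true), (y, true), (z, false)], .inl ⟨?_, ?_⟩⟩ <;>
    rw [tau_mk_of_isReduced _ (by simp [FreeGroup.IsReduced, hzy.symm])] <;>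
    norm_num [wtc, omegaW, hc, hc', hz, hz']

lemma ConesSeparated.of_neg_pos_of_leftOf_pos (hzx : z ≠ x)
    (hc : leftOf u (x, false) (y, true)) (hc' : ¬ leftOf u' (x, false) (y, true))
    (hx : leftOf u (x, true) (z, true)) (hx' : leftOf u' (x, true) (z, true)) :
    ConesSeparated u u' := by
  refine ⟨mk [(z, false), (x, true), (y, true)], .inl ⟨?_, ?_⟩⟩ <;>
    rw [tau_mk_of_isReduced _ (by simp [FreeGroup.IsReduced, hzx])] <;>
    norm_num [wtc, omegaW, hc, hc', hx, hx']

lemma ConesSeparated.of_neg_pos_of_leftOf_neg_pos (hxy : x ≠ y)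
    (hc : leftOf u (x, false) (y, true)) (hc' : ¬ leftOf u' (x, false) (y, true))
    (h₁ : leftOf u (y, false) (x, false)) (h₁' : leftOf u' (y, false) (x, false))
    (h₂ : leftOf u (y, false) (x, true)) (h₂' : leftOf u' (y, false) (x, true)) :
    ConesSeparated u u' := by
  refine ⟨mk [(x, true), (y, true), (x, false), (y, false)], .inl ⟨?_, ?_⟩⟩ <;>
    rw [tau_mk_of_isReduced _ (by simp [FreeGroup.IsReduced, hxy.symm])] <;>
    norm_num [wtc, omegaW, hc, hc', h₁, h₁', h₂, h₂']

lemma ConesSeparated.of_neg_pos_self_of_leftOf (hzx : z ≠ x)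
    (hc : leftOf u (x, false) (x, true)) (hc' : ¬ leftOf u' (x, false) (x, true))
    (hs : leftOf u (x, false) (z, true)) (hs' : leftOf u' (x, false) (z, true))
    (ht : ¬ leftOf u (z, false) (x, false)) (ht' : ¬ leftOf u' (z, false) (x, false)) :
    ConesSeparated u u' := by
  refine ⟨mk [(x, true), (z, true), (x, false), (x, false)], .inr ⟨?_, ?_⟩⟩ <;>
    rw [tau_mk_of_isReduced _ (by simp [FreeGroup.IsReduced, hzx])] <;>
    norm_num [wtc, omegaW, hc, hc', hs, hs', ht, ht']

lemma ConesSeparated.of_neg_pos_self_of_not_leftOf (hzx : z ≠ x)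
    (hc : leftOf u (x, false) (x, true)) (hc' : ¬ leftOf u' (x, false) (x, true))
    (hs : ¬ leftOf u (x, false) (z, true)) (hs' : ¬ leftOf u' (x, false) (z, true))
    (ht : ¬ leftOf u (z, false) (x, false)) (ht' : ¬ leftOf u' (z, false) (x, false)) :
    ConesSeparated u u' := by
  refine ⟨mk [(x, true), (x, true), (z, true), (x, false)], .inl ⟨?_, ?_⟩⟩ <;>
    rw [tau_mk_of_isReduced _ (by simp [FreeGroup.IsReduced, hzx])] <;>
    norm_num [wtc, omegaW, hc, hc', hs, hs', ht, ht']

lemma ConesSeparated.of_neg_pos_self (hk : 2 ≤ k)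
    (hNN : AgreeOnSign u u' false) (hx : ∀ z, z ≠ x → ¬ leftOf u (z, false) (x, false))
    (hc : leftOf u (x, false) (x, true)) (hc' : ¬ leftOf u' (x, false) (x, true)) :
    ConesSeparated u u' := by
  have : Nontrivial (Fin k) := Fin.nontrivial_iff_two_le.2 hk
  obtain ⟨z, hzx⟩ := exists_ne x
  have ht : ¬ leftOf u (z, false) (x, false) := hx z hzx
  have ht' : ¬ leftOf u' (z, false) (x, false) := fun h => ht ((hNN z x).2 h)
  by_cases hs : leftOf u (x, false) (z, true) <;> by_cases hs' : leftOf u' (x, false) (z, true)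
  · exact .of_neg_pos_self_of_leftOf hzx hc hc' hs hs' ht ht'
  · exact .of_neg_pos_of_not_leftOf_neg hzx.symm hs hs' ht ht'
  · exact (ConesSeparated.of_neg_pos_of_not_leftOf_neg hzx.symm hs' hs ht' ht).symm
  · exact .of_neg_pos_self_of_not_leftOf hzx hc hc' hs hs' ht ht'

lemma ConesSeparated.of_neg_pos_of_ne (hu : IsOriented u)
    (hNN : AgreeOnSign u u' false) (hPP : AgreeOnSign u u' true) (hxy : x ≠ y)
    (hneg : ¬ leftOf u (x, false) (y, false)) (hpos : ¬ leftOf u (x, true) (y, true))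
    (hc : leftOf u (x, false) (y, true)) (hc' : ¬ leftOf u' (x, false) (y, true)) :
    ConesSeparated u u' := by
  have h₁ : leftOf u (y, false) (x, false) :=
    (leftOf_total (hu.2 _) (by simpa using hxy)).resolve_left hneg
  have h₃ : leftOf u (y, true) (x, true) :=
    (leftOf_total (hu.2 _) (by simpa using hxy)).resolve_left hpos
  have h₂ : leftOf u (y, false) (x, true) := leftOf_trans h₁ (leftOf_trans hc h₃)
  by_cases h₂' : leftOf u' (y, false) (x, true)
  · exact .of_neg_pos_of_leftOf_neg_pos hxy hc hc' h₁ ((hNN y x).1 h₁) h₂ h₂'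
  · exact .of_neg_pos_of_leftOf_pos hxy h₂ h₂' h₃ ((hPP y x).1 h₃)

lemma ConesSeparated.of_neg_pos (hk : 2 ≤ k) (hu : IsOriented u)
    (hNN : AgreeOnSign u u' false) (hPP : AgreeOnSign u u' true)
    (hc : leftOf u (x, false) (y, true)) (hc' : ¬ leftOf u' (x, false) (y, true)) :
    ConesSeparated u u' := by
  by_cases hy : ∃ z, z ≠ y ∧ leftOf u (z, false) (y, false)
  · obtain ⟨z, hzy, hz⟩ := hy
    exact .of_neg_pos_of_not_leftOf_neg hzy hc hc' (leftOf_asymm hz)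
      (leftOf_asymm ((hNN z y).1 hz))
  by_cases hx : ∃ z, z ≠ x ∧ leftOf u (x, true) (z, true)
  · obtain ⟨z, hzx, hz⟩ := hx
    exact .of_neg_pos_of_leftOf_pos hzx hc hc' hz ((hPP x z).1 hz)
  push Not at hy hx
  rcases eq_or_ne x y with rfl | hxy
  · exact .of_neg_pos_self hk hNN hy hc hc'
  · exact .of_neg_pos_of_ne hu hNN hPP hxy (hy x hxy) (hx y hxy.symm) hc hc'

end Separation

theorem stmt16 {k : ℕ} (hk : 2 ≤ k) (u u' : List (Letter k))
    (hu : IsOriented u) (hu' : IsOriented u') (hne : u ≠ u') :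
    ∃ g : FreeGroup (Fin k),
      (0 < tau u g ∧ tau u' g < 0) ∨ (tau u g < 0 ∧ 0 < tau u' g) := by
  by_cases hNN : AgreeOnSign u u' false
  swap
  · exact ConesSeparated.of_not_agreeOnSign hNN
  by_cases hPP : AgreeOnSign u u' true
  swap
  · exact ConesSeparated.of_not_agreeOnSign hPP
  obtain ⟨⟨p, _ | _⟩, ⟨q, _ | _⟩, h, h'⟩ := exists_leftOf_and_leftOf_of_ne hu hu' hne
  · exact absurd ((hNN p q).1 h) (leftOf_asymm h')
  · exact ConesSeparated.of_neg_pos hk hu hNN hPP h (leftOf_asymm h')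
  · exact (ConesSeparated.of_neg_pos hk hu' hNN.symm hPP.symm h' (leftOf_asymm h)).symm
  · exact absurd ((hPP p q).1 h) (leftOf_asymm h')
end
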